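/- Let L/K be a finite H-Galois extension and L0 an H-subextension. Define H0 := {h ∈ H | α(h) is L0-linear, i.e. α(h)(c·y) = c·α(h)(y) for all c ∈ L0, y ∈ L}, a K-subspace of H. Then the restriction of the canonical map gives a bijection from L ⊗_K H0 onto End_{L0}(L) := {f ∈ End_K(L) | f(c·y) = c·f(y) for all c ∈ L0, y ∈ L}; in particular L ⊗_K H0 is exactly the preimage of End_{L0}(L) under can. Equivalently, the extension L/L0 is Hopf-Galois for L0 ⊗_K H0. -/

import Mathlib

open TensorProduct

section Defs

variable (K L H : Type) [Field K] [Field L] [Algebra K L] [Ring H] [HopfAlgebra K H]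

/-- `L` is a left `H`-module algebra via `α`. -/
def IsModuleAlgebra (α : H →ₐ[K] Module.End K L) : Prop :=
  (∀ h : H, α h 1 = Coalgebra.counit (R := K) h • (1 : L)) ∧
  ∀ h : H,
    (α h : L →ₗ[K] L) ∘ₗ LinearMap.mul' K L =
      LinearMap.mul' K L ∘ₗ
        TensorProduct.homTensorHomMap (RingHom.id K) L L L L
          (TensorProduct.map (α.toLinearMap : H →ₗ[K] (L →ₗ[K] L))
            (α.toLinearMap : H →ₗ[K] (L →ₗ[K] L)) (Coalgebra.comul (R := K) h))

noncomputable def lsmulLift (V M : Type) [AddCommGroup V] [Module K V] [AddCommGroup M]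
    [Module K M] [Module L M] [IsScalarTower K L M] [SMulCommClass K L M]
    (φ : V →ₗ[K] M) : L ⊗[K] V →ₗ[K] M :=
  TensorProduct.lift
    (LinearMap.mk₂ K (fun (x : L) (v : V) => x • φ v)
      (fun x x' v => add_smul x x' (φ v))
      (fun c x v => smul_assoc c x (φ v))
      (fun x v v' => by (try dsimp only); rw [map_add, smul_add])
      (fun c x v => by (try dsimp only); rw [map_smul, smul_comm]))

/-- The canonical (Galois) map `L ⊗[K] H →ₗ[K] End_K(L)`, `x ⊗ h ↦ (y ↦ x * α h y)`. -/
noncomputable def canMap (α : H →ₐ[K] Module.End K L) : L ⊗[K] H →ₗ[K] (L →ₗ[K] L) :=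
  lsmulLift K L H (L →ₗ[K] L) (α.toLinearMap : H →ₗ[K] (L →ₗ[K] L))

/-- The annihilator `J(L0)` of an intermediate field. -/
def Jann (α : H →ₐ[K] Module.End K L) (L0 : IntermediateField K L) : Submodule K H where
  carrier := {h : H | ∀ x ∈ L0, α h x = 0}
  add_mem' := by
    intro a b ha hb x hx
    simp [map_add, LinearMap.add_apply, ha x hx, hb x hx]
  zero_mem' := by intro x hx; simp
  smul_mem' := by
    intro c a ha x hx
    simp [map_smul, LinearMap.smul_apply, ha x hx]

/-- The map `H →ₗ[K] Hom_K(L0, L)`, `h ↦ (α h)|_{L0}`. -/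
def resMap (α : H →ₐ[K] Module.End K L) (L0 : IntermediateField K L) :
    H →ₗ[K] (↥L0 →ₗ[K] L) where
  toFun h := (α h : L →ₗ[K] L) ∘ₗ L0.val.toLinearMap
  map_add' h h' := by ext x; simp
  map_smul' c h := by ext x; simp

lemma Jann_le_ker (α : H →ₐ[K] Module.End K L) (L0 : IntermediateField K L) :
    Jann K L H α L0 ≤ LinearMap.ker (resMap K L H α L0) := by
  intro h hh
  rw [LinearMap.mem_ker]
  ext x
  exact hh x x.2

/-- The induced canonical map `L ⊗[K] (H / J(L0)) →ₗ[K] Hom_K(L0, L)`. -/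
noncomputable def can0 (α : H →ₐ[K] Module.End K L) (L0 : IntermediateField K L) :
    L ⊗[K] (H ⧸ Jann K L H α L0) →ₗ[K] (↥L0 →ₗ[K] L) :=
  lsmulLift K L (H ⧸ Jann K L H α L0) (↥L0 →ₗ[K] L)
    ((Jann K L H α L0).liftQ (resMap K L H α L0) (Jann_le_ker K L H α L0))

/-- `L0` is an `H`-subextension: the induced canonical map is injective. -/
def IsHSubextension (α : H →ₐ[K] Module.End K L) (L0 : IntermediateField K L) : Prop :=
  Function.Injective (can0 K L H α L0)

end Defs

section Aux

variable (K L H : Type) [Field K] [Field L] [Algebra K L] [Ring H] [HopfAlgebra K H]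

lemma canMap_tmul_apply (α : H →ₐ[K] Module.End K L) (x : L) (h : H) (y : L) :
    canMap K L H α (x ⊗ₜ[K] h) y = x * α h y := by
  simp [canMap, lsmulLift, smul_eq_mul]

lemma can0_tmul_apply (α : H →ₐ[K] Module.End K L) (L0 : IntermediateField K L)
    (x : L) (h : H) (c : ↥L0) :
    can0 K L H α L0 (x ⊗ₜ[K] Submodule.Quotient.mk h) c = x * α h (c : L) := by
  simp [can0, lsmulLift, resMap, smul_eq_mul]

/-- The auxiliary map `h ↦ Σ h₂ ⊗ h̄₁ − h ⊗ 1̄`. -/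
noncomputable def gMap (α : H →ₐ[K] Module.End K L) (L0 : IntermediateField K L) :
    H →ₗ[K] H ⊗[K] (H ⧸ Jann K L H α L0) :=
  (TensorProduct.map LinearMap.id (Jann K L H α L0).mkQ ∘ₗ (TensorProduct.comm K H H).toLinearMap ∘ₗ
    (Coalgebra.comul (R := K) (A := H)))
  - (TensorProduct.mk K H (H ⧸ Jann K L H α L0)).flip (Submodule.Quotient.mk 1)

/-- The injective comparison map `Ψ`. -/
noncomputable def psiMap (α : H →ₐ[K] Module.End K L) (L0 : IntermediateField K L) :
    L ⊗[K] (H ⊗[K] (H ⧸ Jann K L H α L0)) →ₗ[K] (L →ₗ[K] L ⊗[K] (H ⧸ Jann K L H α L0)) :=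
  TensorProduct.rTensorHomToHomRTensor (RingHom.id K) L L (H ⧸ Jann K L H α L0) ∘ₗ
    (canMap K L H α).rTensor (H ⧸ Jann K L H α L0) ∘ₗ
      (TensorProduct.assoc K L H (H ⧸ Jann K L H α L0)).symm.toLinearMap

lemma psiMap_injective [FiniteDimensional K L] (α : H →ₐ[K] Module.End K L)
    (L0 : IntermediateField K L) (hGal : Function.Bijective (canMap K L H α)) :
    Function.Injective (psiMap K L H α L0) := by
  have h1 : Function.Injective (rTensorHomToHomRTensor (RingHom.id K) L L (H ⧸ Jann K L H α L0)) := by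
    rw [← rTensorHomEquivHomRTensor_toLinearMap]
    exact (rTensorHomEquivHomRTensor K L L _).injective
  have h2 : Function.Injective ((canMap K L H α).rTensor (H ⧸ Jann K L H α L0)) :=
    Module.Flat.rTensor_preserves_injective_linearMap _ hGal.injective
  intro a b hab
  simp only [psiMap, LinearMap.comp_apply, LinearEquiv.coe_coe] at hab
  exact (TensorProduct.assoc K L H _).symm.injective (h2 (h1 hab))

lemma aux1 (α : H →ₐ[K] Module.End K L) (L0 : IntermediateField K L)
    (x y : L) (c : ↥L0) (w : H ⊗[K] H) :
    can0 K L H α L0 (psiMap K L H α L0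
        (x ⊗ₜ (TensorProduct.map LinearMap.id (Jann K L H α L0).mkQ
          ((TensorProduct.comm K H H) w))) y) c
      = x * LinearMap.mul' K L (TensorProduct.homTensorHomMap (RingHom.id K) L L L L
          (TensorProduct.map (α.toLinearMap : H →ₗ[K] (L →ₗ[K] L))
            (α.toLinearMap : H →ₗ[K] (L →ₗ[K] L)) w) ((c : L) ⊗ₜ[K] y)) := by
  induction w using TensorProduct.induction_on with
  | zero => simp
  | tmul a b =>
      simp only [TensorProduct.comm_tmul, TensorProduct.map_tmul, LinearMap.id_coe, id_eq,
        psiMap, LinearMap.comp_apply, LinearEquiv.coe_coe, TensorProduct.assoc_symm_tmul,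
        LinearMap.rTensor_tmul, TensorProduct.rTensorHomToHomRTensor_apply,
        canMap_tmul_apply, can0_tmul_apply, TensorProduct.homTensorHomMap_apply,
        LinearMap.mul'_apply, AlgHom.toLinearMap_apply, Submodule.mkQ_apply]
      ring
  | add u v hu hv =>
      simp only [map_add, TensorProduct.tmul_add, LinearMap.add_apply, hu, hv, mul_add]

lemma aux2 (α : H →ₐ[K] Module.End K L) (L0 : IntermediateField K L)
    (x y : L) (c : ↥L0) (h : H) :
    can0 K L H α L0 (psiMap K L H α L0
        (x ⊗ₜ (h ⊗ₜ[K] Submodule.Quotient.mk (p := Jann K L H α L0) 1)) y) c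
      = x * α h y * (c : L) := by
  simp only [psiMap, LinearMap.comp_apply, LinearEquiv.coe_coe, TensorProduct.assoc_symm_tmul,
    LinearMap.rTensor_tmul, TensorProduct.rTensorHomToHomRTensor_apply, canMap_tmul_apply,
    can0_tmul_apply, map_one, Module.End.one_apply]

lemma key_eval (α : H →ₐ[K] Module.End K L) (hMA : IsModuleAlgebra K L H α)
    (L0 : IntermediateField K L) (t : L ⊗[K] H) (y : L) (c : ↥L0) :
    can0 K L H α L0 (psiMap K L H α L0 ((gMap K L H α L0).lTensor L t) y) c
      = canMap K L H α t ((c : L) * y) - (c : L) * canMap K L H α t y := by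
  induction t using TensorProduct.induction_on with
  | zero => simp
  | tmul x h =>
      have hg : gMap K L H α L0 h = (TensorProduct.map LinearMap.id (Jann K L H α L0).mkQ)
          ((TensorProduct.comm K H H) (Coalgebra.comul (R := K) h))
          - h ⊗ₜ Submodule.Quotient.mk 1 := rfl
      rw [LinearMap.lTensor_tmul, hg, TensorProduct.tmul_sub, map_sub, LinearMap.sub_apply,
        map_sub, LinearMap.sub_apply, aux1, aux2, canMap_tmul_apply, canMap_tmul_apply]
      have hax := congrArg (fun f => f ((c : L) ⊗ₜ[K] y)) (hMA.2 h)
      simp only [LinearMap.comp_apply, LinearMap.mul'_apply] at hax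
      rw [← hax]
      ring
  | add u v hu hv =>
      simp only [map_add, LinearMap.add_apply, hu, hv]
      ring

end Aux

section Statement

variable (K L H : Type) [Field K] [Field L] [Algebra K L] [Ring H] [HopfAlgebra K H]

/-- The subspace `H0` of elements of `H` acting `L0`-linearly. -/
def L0LinearPart (α : H →ₐ[K] Module.End K L) (L0 : IntermediateField K L) :
    Submodule K H where
  carrier := {h : H | ∀ c ∈ L0, ∀ y : L, α h (c * y) = c * α h y}
  add_mem' := by
    intro a b ha hb c hc y
    simp [map_add, LinearMap.add_apply, ha c hc y, hb c hc y, mul_add]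
  zero_mem' := by intro c hc y; simp
  smul_mem' := by
    intro k a ha c hc y
    simp [map_smul, LinearMap.smul_apply, ha c hc y, Algebra.smul_def]
    ring

/-- The subspace `End_{L0}(L)` of `L0`-linear endomorphisms of `L`. -/
def EndL0 (L0 : IntermediateField K L) : Submodule K (L →ₗ[K] L) where
  carrier := {f : L →ₗ[K] L | ∀ c ∈ L0, ∀ y : L, f (c * y) = c * f y}
  add_mem' := by
    intro a b ha hb c hc y
    simp [LinearMap.add_apply, ha c hc y, hb c hc y, mul_add]
  zero_mem' := by intro c hc y; simp
  smul_mem' := by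
    intro k a ha c hc y
    simp [LinearMap.smul_apply, ha c hc y, Algebra.smul_def]
    ring

lemma ker_gMap_le (α : H →ₐ[K] Module.End K L) (hMA : IsModuleAlgebra K L H α)
    (L0 : IntermediateField K L) :
    LinearMap.ker (gMap K L H α L0) ≤ L0LinearPart K L H α L0 := by
  intro h hh c hc y
  have hkey := key_eval K L H α hMA L0 ((1 : L) ⊗ₜ h) y ⟨c, hc⟩
  rw [LinearMap.lTensor_tmul, LinearMap.mem_ker.mp hh, TensorProduct.tmul_zero] at hkey
  simp only [map_zero, LinearMap.zero_apply, canMap_tmul_apply, one_mul] at hkey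
  exact sub_eq_zero.mp hkey.symm

lemma canMap_mem_EndL0_of_mem_range (α : H →ₐ[K] Module.End K L) (L0 : IntermediateField K L)
    (t : L ⊗[K] H)
    (ht : t ∈ LinearMap.range (LinearMap.lTensor L (L0LinearPart K L H α L0).subtype)) :
    canMap K L H α t ∈ EndL0 K L L0 := by
  obtain ⟨s, rfl⟩ := ht
  induction s using TensorProduct.induction_on with
  | zero => rw [map_zero, map_zero]; exact (EndL0 K L L0).zero_mem
  | tmul x h =>
      rw [LinearMap.lTensor_tmul]
      intro c hc y
      rw [Submodule.coe_subtype, canMap_tmul_apply, canMap_tmul_apply, h.2 c hc y]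
      ring
  | add u v hu hv => rw [map_add, map_add]; exact (EndL0 K L L0).add_mem hu hv

lemma mem_range_of_canMap_mem [FiniteDimensional K L] (α : H →ₐ[K] Module.End K L)
    (hMA : IsModuleAlgebra K L H α) (hGal : Function.Bijective (canMap K L H α))
    (L0 : IntermediateField K L) (hsub : IsHSubextension K L H α L0) (t : L ⊗[K] H)
    (ht : canMap K L H α t ∈ EndL0 K L L0) :
    t ∈ LinearMap.range (LinearMap.lTensor L (L0LinearPart K L H α L0).subtype) := by
  have hzero : (gMap K L H α L0).lTensor L t = 0 := by
    apply psiMap_injective K L H α L0 hGal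
    rw [map_zero]
    ext y
    rw [LinearMap.zero_apply]
    refine hsub ?_
    rw [map_zero]
    ext c
    rw [LinearMap.zero_apply, key_eval K L H α hMA L0 t y c, ht (c : L) c.2 y, sub_self]
  have hex : Function.Exact ((LinearMap.ker (gMap K L H α L0)).subtype.lTensor L)
      ((gMap K L H α L0).lTensor L) :=
    Module.Flat.lTensor_exact L (LinearMap.exact_subtype_ker_map _)
  obtain ⟨s, hs⟩ := (hex t).mp hzero
  refine ⟨(Submodule.inclusion (ker_gMap_le K L H α hMA L0)).lTensor L s, ?_⟩
  rw [← LinearMap.comp_apply, ← LinearMap.lTensor_comp,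
    Submodule.subtype_comp_inclusion]
  exact hs

/-- For a finite `H`-Galois extension `L/K` and an `H`-subextension `L0`, the canonical map
restricts to a bijection from `L ⊗[K] H0` onto `End_{L0}(L)`; in particular `L ⊗[K] H0`
is exactly the preimage of `End_{L0}(L)` under `can`. -/
theorem canMap_bijOn_L0Linear [FiniteDimensional K L] [FiniteDimensional K H]
    (α : H →ₐ[K] Module.End K L) (hMA : IsModuleAlgebra K L H α)
    (hGal : Function.Bijective (canMap K L H α))
    (L0 : IntermediateField K L) (hsub : IsHSubextension K L H α L0) :
    Set.BijOn (canMap K L H α)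
        (LinearMap.range (LinearMap.lTensor L (L0LinearPart K L H α L0).subtype) : Set (L ⊗[K] H))
        (EndL0 K L L0 : Set (L →ₗ[K] L)) ∧
      (canMap K L H α) ⁻¹' (EndL0 K L L0 : Set (L →ₗ[K] L)) =
        (LinearMap.range (LinearMap.lTensor L (L0LinearPart K L H α L0).subtype) : Set (L ⊗[K] H)) := by
  constructor
  · refine ⟨fun t ht => canMap_mem_EndL0_of_mem_range K L H α L0 t ht,
      hGal.injective.injOn, ?_⟩
    intro f hf
    obtain ⟨t, rfl⟩ := hGal.surjective f
    exact ⟨t, mem_range_of_canMap_mem K L H α hMA hGal L0 hsub t hf, rfl⟩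
  · ext t
    exact ⟨fun h => mem_range_of_canMap_mem K L H α hMA hGal L0 hsub t h,
      fun h => canMap_mem_EndL0_of_mem_range K L H α L0 t h⟩


end Statement
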